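/- Let r ≤ 0 and let x : [0,∞) → ℝ be differentiable with x'(t) = r x(t) − x(t)³ for all t ≥ 0. Then x(t) → 0 as t → ∞. In other words, for r ≤ 0 the equilibrium state 0 of the pitchfork ODE attracts all orbits (it is globally asymptotically stable). -/

import Mathlib

open Set Filter Topology

/-!
`V = x²` is a Lyapunov function: `V' = 2 r x² - 2 x⁴ ≤ -2 V²` because `r ≤ 0`. So `V` is
nonincreasing, and while `V ≥ ε` it decreases at rate at least `2 ε²`, so it drops below every
`ε > 0` in finite time and stays there.
-/

theorem antitoneOn_Ici_of_hasDerivWithinAt_nonpos {f f' : ℝ → ℝ} {a : ℝ}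
    (hf : ∀ t ∈ Ici a, HasDerivWithinAt f (f' t) (Ici a) t) (hf' : ∀ t ∈ Ici a, f' t ≤ 0) :
    AntitoneOn f (Ici a) :=
  antitoneOn_of_hasDerivWithinAt_nonpos (convex_Ici a)
    (fun t ht => (hf t ht).continuousWithinAt)
    (fun t ht => by
      rw [interior_Ici] at ht ⊢
      exact (hf t (mem_Ici.2 ht.le)).mono Ioi_subset_Ici_self)
    (fun t ht => hf' t (interior_subset ht))

theorem tendsto_nhds_zero_of_antitoneOn_Ici {V : ℝ → ℝ} {a : ℝ} (hanti : AntitoneOn V (Ici a))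
    (hnonneg : ∀ t ∈ Ici a, 0 ≤ V t) (hsmall : ∀ ε > 0, ∃ t ∈ Ici a, V t < ε) :
    Tendsto V atTop (𝓝 0) := by
  refine tendsto_order.2 ⟨fun b hb => ?_, fun ε hε => ?_⟩
  · filter_upwards [eventually_ge_atTop a] with t ht
    exact hb.trans_le (hnonneg t ht)
  · obtain ⟨t₀, ht₀, hVt₀⟩ := hsmall ε hε
    filter_upwards [eventually_ge_atTop t₀] with t ht
    exact (hanti ht₀ (mem_Ici.2 (le_trans ht₀ ht)) ht).trans_lt hVt₀

section DifferentialInequality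

variable {V V' : ℝ → ℝ} {a c : ℝ}
  (hV : ∀ t ∈ Ici a, HasDerivWithinAt V (V' t) (Ici a) t)
  (hV' : ∀ t ∈ Ici a, V' t ≤ -c * V t ^ 2)
include hV hV'

theorem exists_lt_of_hasDerivWithinAt_le_neg_sq (hc : 0 < c) {ε : ℝ} (hε : 0 < ε) :
    ∃ t ∈ Ici a, V t < ε := by
  by_contra! hlarge
  have hdecay : AntitoneOn (fun t => V t + c * ε ^ 2 * t) (Ici a) := by
    refine antitoneOn_Ici_of_hasDerivWithinAt_nonpos (f' := fun t => V' t + c * ε ^ 2)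
      (fun t ht => (hV t ht).add ((hasDerivWithinAt_id t _).const_mul _ |>.congr_deriv
        (mul_one _))) fun t ht => ?_
    have hsq : ε ^ 2 ≤ V t ^ 2 := pow_le_pow_left₀ hε.le (hlarge t ht) 2
    nlinarith [hV' t ht]
  -- the time at which the bound `V T ≤ V a - c ε² (T - a)` reaches `0`
  set T := a + V a / (c * ε ^ 2)
  have hVa : 0 < V a := hε.trans_le (hlarge a self_mem_Ici)
  have haT : a ≤ T := le_add_of_nonneg_right (by positivity)
  have hgT := hdecay self_mem_Ici haT haT
  have hT : c * ε ^ 2 * (T - a) = V a := by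
    simp only [T, add_sub_cancel_left]
    field_simp
  nlinarith [hlarge T haT]

theorem tendsto_nhds_zero_of_hasDerivWithinAt_le_neg_sq (hc : 0 < c)
    (hnonneg : ∀ t ∈ Ici a, 0 ≤ V t) : Tendsto V atTop (𝓝 0) :=
  tendsto_nhds_zero_of_antitoneOn_Ici
    (antitoneOn_Ici_of_hasDerivWithinAt_nonpos hV fun t ht =>
      (hV' t ht).trans (by nlinarith [sq_nonneg (V t)]))
    hnonneg fun _ hε => exists_lt_of_hasDerivWithinAt_le_neg_sq hV hV' hc hε

end DifferentialInequality

/-- For `r ≤ 0`, every forward solution of the pitchfork ODE `x' = r x - x³` on `[0, ∞)`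
tends to `0` as `t → ∞`: the equilibrium `0` attracts all orbits. -/
theorem pitchfork_zero_globally_attracting (r : ℝ) (hr : r ≤ 0) (x : ℝ → ℝ)
    (hx : ∀ t ∈ Ici (0 : ℝ), HasDerivWithinAt x (r * x t - x t ^ 3) (Ici 0) t) :
    Tendsto x atTop (nhds 0) := by
  have hsq : ∀ t ∈ Ici (0 : ℝ),
      HasDerivWithinAt (fun s => x s ^ 2) (2 * x t * (r * x t - x t ^ 3)) (Ici 0) t :=
    fun t ht => ((hx t ht).pow 2).congr_deriv (by ring)
  have hsq' : ∀ t ∈ Ici (0 : ℝ), 2 * x t * (r * x t - x t ^ 3) ≤ -2 * (x t ^ 2) ^ 2 :=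
    fun t _ => by nlinarith [mul_nonpos_of_nonpos_of_nonneg hr (sq_nonneg (x t))]
  have hsq_tendsto : Tendsto (fun t => x t ^ 2) atTop (𝓝 0) :=
    tendsto_nhds_zero_of_hasDerivWithinAt_le_neg_sq hsq hsq' two_pos fun t _ => sq_nonneg (x t)
  have habs : Tendsto (fun t => |x t|) atTop (𝓝 0) := by
    simpa only [Real.sqrt_sq_eq_abs, Real.sqrt_zero] using hsq_tendsto.sqrt
  exact (tendsto_zero_iff_abs_tendsto_zero x).2 habs
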